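/- For 0 ≤ k ≤ n, the type B Stirling numbers of the second kind satisfy S_B(n,k) = Σ_{j=k}^{n} 2^{j-k} · C(n,j) · S(j,k). -/
import Mathlib


open Finset

/-- Stirling numbers of the second kind. -/
def stirling2 : ℕ → ℕ → ℕ
  | 0, 0 => 1
  | 0, _ + 1 => 0
  | _ + 1, 0 => 0
  | n + 1, k + 1 => stirling2 n k + (k + 1) * stirling2 n (k + 1)

/-- Type B Stirling numbers of the second kind:
`S_B(n,k) = S_B(n-1,k-1) + (2k+1) S_B(n-1,k)`, `S_B(0,k) = δ_{0k}`. -/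
def stirlingB : ℕ → ℕ → ℕ
  | 0, 0 => 1
  | 0, _ + 1 => 0
  | n + 1, 0 => 1 * stirlingB n 0
  | n + 1, k + 1 => stirlingB n k + (2 * (k + 1) + 1) * stirlingB n (k + 1)

lemma stirling2_eq_zero : ∀ n k, n < k → stirling2 n k = 0 := by
  intro n
  induction n with
  | zero =>
    intro k h
    cases k with
    | zero => omega
    | succ m => rfl
  | succ n ih =>
    intro k h
    cases k with
    | zero => omega
    | succ m =>
      show stirling2 n m + (m + 1) * stirling2 n (m + 1) = 0
      rw [ih m (by omega), ih (m + 1) (by omega)]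
      ring

lemma pow_stirling (j k : ℕ) :
    2 ^ (j - k) * stirling2 j (k + 1) = 2 * (2 ^ (j - (k + 1)) * stirling2 j (k + 1)) := by
  rcases le_or_gt j k with h | h
  · rw [stirling2_eq_zero j (k + 1) (by omega)]; ring
  · rw [show j - k = (j - (k + 1)) + 1 by omega]; ring

lemma sum_eq : ∀ n k, stirlingB n k =
    ∑ j ∈ Finset.range (n + 1), 2 ^ (j - k) * Nat.choose n j * stirling2 j k := by
  intro n
  induction n with
  | zero =>
    intro k
    cases k with
    | zero => simp [stirlingB, stirling2]
    | succ m => simp [stirlingB, stirling2_eq_zero 0 (m + 1) (by omega)]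
  | succ n ih =>
    intro k
    cases k with
    | zero =>
      show 1 * stirlingB n 0 = _
      rw [one_mul, ih 0]
      rw [Finset.sum_range_succ' (fun j => 2 ^ (j - 0) * Nat.choose (n + 1) j * stirling2 j 0),
        Finset.sum_range_succ' (fun j => 2 ^ (j - 0) * Nat.choose n j * stirling2 j 0)]
      simp [show ∀ j : ℕ, stirling2 (j + 1) 0 = 0 from fun _ => rfl]
    | succ k =>
      show stirlingB n k + (2 * (k + 1) + 1) * stirlingB n (k + 1) = _
      rw [ih k, ih (k + 1)]
      rw [Finset.sum_range_succ'
        (fun j => 2 ^ (j - (k + 1)) * Nat.choose (n + 1) j * stirling2 j (k + 1))]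
      have h0 : 2 ^ (0 - (k + 1)) * Nat.choose (n + 1) 0 * stirling2 0 (k + 1) = 0 := by
        rw [stirling2_eq_zero 0 (k + 1) (by omega)]; ring
      rw [h0, add_zero]
      have hterm : ∀ j, 2 ^ ((j + 1) - (k + 1)) * Nat.choose (n + 1) (j + 1) * stirling2 (j + 1) (k + 1)
          = (2 ^ (j - k) * Nat.choose n j * stirling2 j k
              + 2 * (k + 1) * (2 ^ (j - (k + 1)) * Nat.choose n j * stirling2 j (k + 1)))
            + 2 ^ (j - k) * Nat.choose n (j + 1) * stirling2 (j + 1) (k + 1) := by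
        intro j
        rw [show (j + 1) - (k + 1) = j - k by omega, Nat.choose_succ_succ,
          show stirling2 (j + 1) (k + 1) = stirling2 j k + (k + 1) * stirling2 j (k + 1) from rfl]
        have h := pow_stirling j k
        zify at h ⊢
        linear_combination ((k : ℤ) + 1) * (Nat.choose n j) * h
      rw [Finset.sum_congr rfl (fun j _ => hterm j), Finset.sum_add_distrib,
        Finset.sum_add_distrib]
      have hB : ∑ j ∈ Finset.range (n + 1),
            2 ^ (j - k) * Nat.choose n (j + 1) * stirling2 (j + 1) (k + 1)
          = ∑ j ∈ Finset.range (n + 1),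
            2 ^ (j - (k + 1)) * Nat.choose n j * stirling2 j (k + 1) := by
        rw [Finset.sum_range_succ
            (fun j => 2 ^ (j - k) * Nat.choose n (j + 1) * stirling2 (j + 1) (k + 1)),
          Nat.choose_succ_self, Finset.sum_range_succ'
            (fun j => 2 ^ (j - (k + 1)) * Nat.choose n j * stirling2 j (k + 1)),
          stirling2_eq_zero 0 (k + 1) (by omega)]
        simp [Nat.succ_sub_succ]
      rw [hB, ← Finset.mul_sum]
      ring

theorem stmt12 (n k : ℕ) (h : k ≤ n) :
    stirlingB n k = ∑ j ∈ Finset.Icc k n, 2 ^ (j - k) * Nat.choose n j * stirling2 j k := by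
  rw [sum_eq n k]
  symm
  apply Finset.sum_subset
  · intro j hj
    simp only [Finset.mem_Icc, Finset.mem_range] at *
    omega
  · intro j hj hj'
    simp only [Finset.mem_Icc, Finset.mem_range] at *
    rw [stirling2_eq_zero j k (by omega)]
    ring
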